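/- Let (p_n)_{n≥1} be a sequence of distinct real numbers with no finite accumulation point, let (r_n)_{n≥1} be positive integers, and let a_{n,k} ∈ ℂ for 1 ≤ k ≤ r_n. Assume that for every ε > 0 the double series Σ_{n=1}^∞ Σ_{k=1}^{r_n} |a_{n,k}|·ε^{−k} converges, and set P(s) = Σ_{n=1}^∞ Σ_{k=1}^{r_n} a_{n,k}·(s−ip_n)^{−k} and f(t) = Σ_{n=1}^∞ e^{i p_n t} Σ_{k=1}^{r_n} a_{n,k}·t^{k−1}/(k−1)!. Then for every s ∈ ℂ with Re(s) > 0 the function t ↦ e^{−st} f(t) is Lebesgue integrable on (0,∞) and ∫_0^∞ e^{−st} f(t) dt = P(s), and for every s with Re(s) < 0 the function t ↦ e^{−st} f(t) is Lebesgue integrable on (−∞,0) and −∫_{−∞}^0 e^{−st} f(t) dt = P(s). -/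

import Mathlib

/-!
Each summand `e^{i p_n t} Σ_k a_{n,k} t^{k-1}/(k-1)!` is an exponential polynomial whose Laplace
transform at `s` is its principal part `Σ_k a_{n,k} (s - i p_n)^{-k}`, by
`∫_0^∞ t^m e^{-wt} dt = m!/w^{m+1}` for `Re w > 0`. Taking the absolute values of the
coefficients and `w = Re s` bounds the `L¹(0,∞)` norm of the `n`-th summand by
`Σ_k |a_{n,k}| (Re s)^{-k}`, so the hypothesis with `ε = Re s` makes these norms summable, and the
series may be integrated term by term. For `Re s < 0` the substitution `t ↦ -t` reduces to the
first case with `p_n` replaced by `-p_n` and `a_{n,k}` by `(-1)^{k-1} a_{n,k}`.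
-/

open MeasureTheory Filter Set Complex
open scoped Nat

namespace MeasureTheory

theorem integrable_tsum_of_summable_integral_norm {α E : Type*} [MeasurableSpace α]
    {μ : Measure α} [NormedAddCommGroup E] [CompleteSpace E] {F : ℕ → α → E}
    (hF_int : ∀ n, Integrable (F n) μ) (hF_sum : Summable fun n ↦ ∫ a, ‖F n a‖ ∂μ) :
    Integrable (fun a ↦ ∑' n, F n a) μ := by
  have hmeas : ∀ n, AEMeasurable (fun a ↦ ‖F n a‖ₑ) μ := fun n ↦ (hF_int n).1.enorm
  have hfin : ∫⁻ a, ∑' n, ‖F n a‖ₑ ∂μ ≠ ⊤ := by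
    rw [lintegral_tsum hmeas,
      funext fun n ↦ (ofReal_integral_norm_eq_lintegral_enorm (hF_int n)).symm,
      ← ENNReal.ofReal_tsum_of_nonneg (fun _ ↦ integral_nonneg fun _ ↦ norm_nonneg _) hF_sum]
    exact ENNReal.ofReal_ne_top
  have hsummable : ∀ᵐ a ∂μ, Summable fun n ↦ F n a := by
    filter_upwards [ae_lt_top' (AEMeasurable.tsum hmeas) hfin] with a ha
    exact (tsum_enorm_ne_top_iff_summable_norm (f := fun n ↦ F n a)).mp ha.ne |>.of_norm
  refine ⟨aestronglyMeasurable_of_tendsto_ae (f := fun N a ↦ ∑ n ∈ Finset.range N, F n a)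
    atTop (fun N ↦ ?_) ?_, ?_⟩
  · exact Finset.aestronglyMeasurable_fun_sum _ fun n _ ↦ (hF_int n).1
  · filter_upwards [hsummable] with a ha using ha.hasSum.tendsto_sum_nat
  · exact (lintegral_mono fun a ↦ enorm_tsum_le_tsum_enorm).trans_lt hfin.lt_top

end MeasureTheory

lemma norm_pow_mul_cexp_neg_mul (w : ℂ) (m : ℕ) {t : ℝ} (ht : 0 ≤ t) :
    ‖(t : ℂ) ^ m * cexp (-w * t)‖ = t ^ m * Real.exp (-w.re * t) := by
  simp [Complex.norm_exp, abs_of_nonneg ht]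

lemma integrableOn_pow_mul_cexp_neg_mul {w : ℂ} (hw : 0 < w.re) (m : ℕ) :
    IntegrableOn (fun t : ℝ ↦ (t : ℂ) ^ m * cexp (-w * t)) (Ioi 0) := by
  have hreal : IntegrableOn (fun t : ℝ ↦ t ^ (m : ℝ) * Real.exp (-w.re * t ^ (1 : ℝ))) (Ioi 0) :=
    integrableOn_rpow_mul_exp_neg_mul_rpow (by linarith [m.cast_nonneg (α := ℝ)]) one_pos hw
  refine hreal.mono' (by fun_prop) ?_
  filter_upwards [ae_restrict_mem measurableSet_Ioi] with t ht
  rw [norm_pow_mul_cexp_neg_mul w m (le_of_lt ht), Real.rpow_one, Real.rpow_natCast]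

lemma integral_pow_mul_cexp_neg_mul {w : ℂ} (hw : 0 < w.re) (m : ℕ) :
    ∫ t in Ioi (0 : ℝ), (t : ℂ) ^ m * cexp (-w * t) = m ! / w ^ (m + 1) := by
  have hw0 : w ≠ 0 := by rintro rfl; simp at hw
  induction m with
  | zero => simpa using integral_exp_mul_complex_Ioi (a := -w) (by simpa using hw) 0
  | succ m ih =>
    -- Integration by parts: `G` is a primitive of `g`, and as both are integrable, `G → 0` at `∞`.
    set G : ℝ → ℂ := fun t ↦ -((t : ℂ) ^ (m + 1) * cexp (-w * t) / w)
    set g : ℝ → ℂ := fun t ↦ (t : ℂ) ^ (m + 1) * cexp (-w * t) -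
      (m + 1) / w * ((t : ℂ) ^ m * cexp (-w * t))
    have hG : ∀ t : ℝ, HasDerivAt G (g t) t := by
      intro t
      refine ((((hasDerivAt_pow (m + 1) (t : ℂ)).mul
        ((hasDerivAt_id (t : ℂ)).const_mul (-w)).cexp).div_const w).neg.comp_ofReal).congr_deriv ?_
      simp only [g, id]
      field_simp
      push_cast
      ring
    have hsucc := integrableOn_pow_mul_cexp_neg_mul hw (m + 1)
    have hm := (integrableOn_pow_mul_cexp_neg_mul hw m).const_mul ((m + 1) / w)
    have hg : IntegrableOn g (Ioi 0) := hsucc.sub hm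
    have hlim := tendsto_zero_of_hasDerivAt_of_integrableOn_Ioi (fun t _ ↦ hG t) hg
      (hsucc.div_const w).neg
    have key := integral_Ioi_of_hasDerivAt_of_tendsto' (fun t _ ↦ hG t) hg hlim
    rw [integral_sub hsucc hm, integral_const_mul, ih, show G 0 = 0 by simp [G], sub_zero,
      sub_eq_zero] at key
    rw [key, Nat.factorial_succ]
    push_cast
    field_simp
    ring

lemma integral_norm_pow_mul_cexp_neg_mul {w : ℂ} (hw : 0 < w.re) (m : ℕ) :
    ∫ t in Ioi (0 : ℝ), ‖(t : ℂ) ^ m * cexp (-w * t)‖ = m ! / w.re ^ (m + 1) := by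
  rw [setIntegral_congr_fun measurableSet_Ioi fun t ht ↦
    norm_pow_mul_cexp_neg_mul w m (le_of_lt ht)]
  have := Real.integral_rpow_mul_exp_neg_mul_Ioi (a := (m : ℝ) + 1) (by positivity) hw
  simp only [add_sub_cancel_right, Real.rpow_natCast, Real.Gamma_nat_eq_factorial] at this
  rw [← Nat.cast_add_one, Real.rpow_natCast] at this
  simpa [neg_mul, div_eq_inv_mul, inv_pow, mul_comm] using this

noncomputable def polyPart (r : ℕ) (a : ℕ → ℂ) (t : ℂ) : ℂ :=
  ∑ k ∈ Finset.Icc 1 r, a k * t ^ (k - 1) / (k - 1)!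

noncomputable def principalPart (r : ℕ) (a : ℕ → ℂ) (z : ℂ) : ℂ :=
  ∑ k ∈ Finset.Icc 1 r, a k * z ^ (-(k : ℤ))

lemma polyPart_neg (r : ℕ) (a : ℕ → ℂ) (t : ℂ) :
    polyPart r a (-t) = polyPart r (fun k ↦ (-1) ^ (k - 1) * a k) t := by
  simp only [polyPart, neg_pow t]
  exact Finset.sum_congr rfl fun k _ ↦ by ring

lemma principalPart_neg (r : ℕ) (a : ℕ → ℂ) (z : ℂ) :
    principalPart r (fun k ↦ (-1) ^ (k - 1) * a k) (-z) = -principalPart r a z := by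
  simp only [principalPart, ← Finset.sum_neg_distrib]
  refine Finset.sum_congr rfl fun k hk ↦ ?_
  obtain ⟨j, rfl⟩ : ∃ j, k = j + 1 := ⟨k - 1, by grind⟩
  simp only [zpow_neg, zpow_natCast, neg_pow z, add_tsub_cancel_right, pow_succ]
  field_simp

lemma cexp_neg_mul_mul_polyPart (w : ℂ) (r : ℕ) (a : ℕ → ℂ) (t : ℝ) :
    cexp (-w * t) * polyPart r a t =
      ∑ k ∈ Finset.Icc 1 r, a k / (k - 1)! * ((t : ℂ) ^ (k - 1) * cexp (-w * t)) := by
  rw [polyPart, Finset.mul_sum]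
  exact Finset.sum_congr rfl fun k _ ↦ by ring

section ExpPoly

variable {w : ℂ} (hw : 0 < w.re) (r : ℕ) (a : ℕ → ℂ)
include hw

lemma integrableOn_cexp_neg_mul_polyPart :
    IntegrableOn (fun t : ℝ ↦ cexp (-w * t) * polyPart r a t) (Ioi 0) := by
  simp_rw [cexp_neg_mul_mul_polyPart]
  exact integrable_finsetSum _ fun k _ ↦ (integrableOn_pow_mul_cexp_neg_mul hw _).const_mul _

lemma integral_cexp_neg_mul_polyPart :
    ∫ t in Ioi (0 : ℝ), cexp (-w * t) * polyPart r a t = principalPart r a w := by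
  simp_rw [cexp_neg_mul_mul_polyPart]
  rw [integral_finsetSum _ fun k _ ↦ (integrableOn_pow_mul_cexp_neg_mul hw _).const_mul _]
  refine Finset.sum_congr rfl fun k hk ↦ ?_
  obtain ⟨j, rfl⟩ : ∃ j, k = j + 1 := ⟨k - 1, by grind⟩
  rw [integral_const_mul, integral_pow_mul_cexp_neg_mul hw]
  have := Nat.cast_ne_zero (R := ℂ) |>.2 (Nat.factorial_ne_zero j)
  simp only [add_tsub_cancel_right, zpow_neg, zpow_natCast]
  field_simp

lemma integral_norm_cexp_neg_mul_polyPart_le :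
    ∫ t in Ioi (0 : ℝ), ‖cexp (-w * t) * polyPart r a t‖ ≤
      ∑ k ∈ Finset.Icc 1 r, ‖a k‖ * w.re ^ (-(k : ℤ)) := by
  have hint : ∀ k, IntegrableOn (fun t : ℝ ↦ ‖(t : ℂ) ^ k * cexp (-w * t)‖) (Ioi 0) :=
    fun k ↦ (integrableOn_pow_mul_cexp_neg_mul hw k).norm
  calc ∫ t in Ioi (0 : ℝ), ‖cexp (-w * t) * polyPart r a t‖
      ≤ ∫ t in Ioi (0 : ℝ), ∑ k ∈ Finset.Icc 1 r,
          ‖a k‖ / (k - 1)! * ‖(t : ℂ) ^ (k - 1) * cexp (-w * t)‖ := by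
        refine integral_mono (integrableOn_cexp_neg_mul_polyPart hw r a).norm
          (integrable_finsetSum _ fun k _ ↦ (hint _).const_mul _) fun t ↦ ?_
        rw [cexp_neg_mul_mul_polyPart]
        refine (norm_sum_le _ _).trans_eq (Finset.sum_congr rfl fun k _ ↦ ?_)
        simp
    _ = ∑ k ∈ Finset.Icc 1 r, ‖a k‖ * w.re ^ (-(k : ℤ)) := by
        rw [integral_finsetSum _ fun k _ ↦ (hint _).const_mul _]
        refine Finset.sum_congr rfl fun k hk ↦ ?_
        obtain ⟨j, rfl⟩ : ∃ j, k = j + 1 := ⟨k - 1, by grind⟩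
        rw [integral_const_mul, integral_norm_pow_mul_cexp_neg_mul hw]
        simp only [add_tsub_cancel_right, zpow_neg, zpow_natCast]
        field_simp

end ExpPoly

section Series

variable {w : ℕ → ℂ} (hw : ∀ n, 0 < (w n).re) {r : ℕ → ℕ} {a : ℕ → ℕ → ℂ}
  (hsum : Summable fun n ↦ ∑ k ∈ Finset.Icc 1 (r n), ‖a n k‖ * (w n).re ^ (-(k : ℤ)))
include hw hsum

lemma summable_integral_norm_cexp_neg_mul_polyPart :
    Summable fun n ↦ ∫ t in Ioi (0 : ℝ), ‖cexp (-w n * t) * polyPart (r n) (a n) t‖ :=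
  hsum.of_nonneg_of_le (fun _ ↦ integral_nonneg fun _ ↦ norm_nonneg _)
    fun n ↦ integral_norm_cexp_neg_mul_polyPart_le (hw n) (r n) (a n)

theorem integrableOn_tsum_cexp_neg_mul_polyPart :
    IntegrableOn (fun t : ℝ ↦ ∑' n, cexp (-w n * t) * polyPart (r n) (a n) t) (Ioi 0) :=
  integrable_tsum_of_summable_integral_norm
    (fun n ↦ integrableOn_cexp_neg_mul_polyPart (hw n) (r n) (a n))
    (summable_integral_norm_cexp_neg_mul_polyPart hw hsum)

theorem integral_tsum_cexp_neg_mul_polyPart :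
    ∫ t in Ioi (0 : ℝ), ∑' n, cexp (-w n * t) * polyPart (r n) (a n) t =
      ∑' n, principalPart (r n) (a n) (w n) := by
  rw [← integral_tsum_of_summable_integral_norm
    (fun n ↦ integrableOn_cexp_neg_mul_polyPart (hw n) (r n) (a n))
    (summable_integral_norm_cexp_neg_mul_polyPart hw hsum)]
  exact tsum_congr fun n ↦ integral_cexp_neg_mul_polyPart (hw n) (r n) (a n)

end Series

noncomputable def expPolySeries (p : ℕ → ℝ) (r : ℕ → ℕ) (c : ℕ → ℕ → ℂ) (t : ℝ) : ℂ :=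
  ∑' n, cexp (I * p n * t) * polyPart (r n) (c n) t

noncomputable def principalSeries (p : ℕ → ℝ) (r : ℕ → ℕ) (c : ℕ → ℕ → ℂ) (s : ℂ) : ℂ :=
  ∑' n, principalPart (r n) (c n) (s - I * p n)

lemma cexp_neg_mul_mul_expPolySeries (p : ℕ → ℝ) (r : ℕ → ℕ) (c : ℕ → ℕ → ℂ) (s : ℂ) (t : ℝ) :
    cexp (-s * t) * expPolySeries p r c t =
      ∑' n, cexp (-(s - I * p n) * t) * polyPart (r n) (c n) t := by
  rw [expPolySeries, ← tsum_mul_left]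
  refine tsum_congr fun n ↦ ?_
  rw [← mul_assoc, ← Complex.exp_add]
  ring_nf

lemma expPolySeries_neg (p : ℕ → ℝ) (r : ℕ → ℕ) (c : ℕ → ℕ → ℂ) (t : ℝ) :
    expPolySeries p r c (-t) = expPolySeries (-p) r (fun n k ↦ (-1) ^ (k - 1) * c n k) t := by
  refine tsum_congr fun n ↦ ?_
  rw [ofReal_neg, polyPart_neg, Pi.neg_apply, ofReal_neg]
  congr 2
  ring

lemma principalSeries_neg (p : ℕ → ℝ) (r : ℕ → ℕ) (c : ℕ → ℕ → ℂ) (s : ℂ) :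
    principalSeries (-p) r (fun n k ↦ (-1) ^ (k - 1) * c n k) (-s) = -principalSeries p r c s := by
  rw [principalSeries, principalSeries, ← tsum_neg]
  refine tsum_congr fun n ↦ ?_
  rw [Pi.neg_apply, ofReal_neg, show -s - I * -(p n : ℂ) = -(s - I * p n) by ring,
    principalPart_neg]

section Laplace

variable {p : ℕ → ℝ} {r : ℕ → ℕ} {c : ℕ → ℕ → ℂ} {s : ℂ}

theorem laplace_expPolySeries_Ioi (hs : 0 < s.re)
    (hsum : Summable fun n ↦ ∑ k ∈ Finset.Icc 1 (r n), ‖c n k‖ * s.re ^ (-(k : ℤ))) :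
    IntegrableOn (fun t : ℝ ↦ cexp (-s * t) * expPolySeries p r c t) (Ioi 0) ∧
      ∫ t in Ioi (0 : ℝ), cexp (-s * t) * expPolySeries p r c t = principalSeries p r c s := by
  have hre : ∀ n, (s - I * p n).re = s.re := by simp
  have hw : ∀ n, 0 < (s - I * p n).re := fun n ↦ hre n ▸ hs
  have hsum' : Summable fun n ↦
      ∑ k ∈ Finset.Icc 1 (r n), ‖c n k‖ * (s - I * p n).re ^ (-(k : ℤ)) := by
    simpa only [hre] using hsum
  simp only [cexp_neg_mul_mul_expPolySeries]
  exact ⟨integrableOn_tsum_cexp_neg_mul_polyPart hw hsum',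
    integral_tsum_cexp_neg_mul_polyPart hw hsum'⟩

theorem laplace_expPolySeries_Iio (hs : s.re < 0)
    (hsum : Summable fun n ↦ ∑ k ∈ Finset.Icc 1 (r n), ‖c n k‖ * (-s.re) ^ (-(k : ℤ))) :
    IntegrableOn (fun t : ℝ ↦ cexp (-s * t) * expPolySeries p r c t) (Iio 0) ∧
      -∫ t in Iio (0 : ℝ), cexp (-s * t) * expPolySeries p r c t = principalSeries p r c s := by
  set c' : ℕ → ℕ → ℂ := fun n k ↦ (-1) ^ (k - 1) * c n k
  have hreflect : ∀ t : ℝ, cexp (-s * ↑(-t)) * expPolySeries p r c (-t) =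
      cexp (-(-s) * t) * expPolySeries (-p) r c' t := by
    intro t
    rw [expPolySeries_neg]
    congr 2
    push_cast
    ring
  obtain ⟨hint, hval⟩ := laplace_expPolySeries_Ioi (p := -p) (c := c') (s := -s)
    (by simpa using hs) (by simpa [c'] using hsum)
  simp only [← hreflect] at hint hval
  refine ⟨(IntegrableOn.comp_neg_Iio (c := (0 : ℝ)) (by rwa [neg_zero])).congr_fun
    (fun t _ ↦ by beta_reduce; rw [neg_neg]) measurableSet_Iio, ?_⟩
  rw [← integral_Iic_eq_integral_Iio, ← neg_zero, ← integral_comp_neg_Ioi, hval,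
    principalSeries_neg, neg_neg]

end Laplace

theorem statement6_general (p : ℕ → ℝ)
    (r : ℕ → ℕ) (c : ℕ → ℕ → ℂ)
    (hsum : ∀ ε : ℝ, 0 < ε → Summable (fun n : ℕ =>
      ∑ k ∈ Finset.Icc 1 (r n), ‖c n k‖ * ε ^ (-(k : ℤ))))
    (P : ℂ → ℂ)
    (hP : ∀ s : ℂ, P s = ∑' n : ℕ, ∑ k ∈ Finset.Icc 1 (r n),
      c n k * (s - Complex.I * p n) ^ (-(k : ℤ)))
    (f : ℝ → ℂ)
    (hf : ∀ t : ℝ, f t = ∑' n : ℕ, Complex.exp (Complex.I * p n * t) *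
      ∑ k ∈ Finset.Icc 1 (r n),
        c n k * (t : ℂ) ^ (k - 1) / (Nat.factorial (k - 1))) :
    (∀ s : ℂ, 0 < s.re →
      MeasureTheory.IntegrableOn (fun t : ℝ => Complex.exp (-s * t) * f t) (Set.Ioi 0) ∧
      (∫ t in Set.Ioi (0:ℝ), Complex.exp (-s * t) * f t) = P s) ∧
    (∀ s : ℂ, s.re < 0 →
      MeasureTheory.IntegrableOn (fun t : ℝ => Complex.exp (-s * t) * f t) (Set.Iio 0) ∧
      -(∫ t in Set.Iio (0:ℝ), Complex.exp (-s * t) * f t) = P s) := by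
  obtain rfl : f = expPolySeries p r c := funext hf
  obtain rfl : P = principalSeries p r c := funext hP
  exact ⟨fun s hs ↦ laplace_expPolySeries_Ioi hs (hsum _ hs),
    fun s hs ↦ laplace_expPolySeries_Iio hs (hsum _ (neg_pos.2 hs))⟩

theorem statement6 (p : ℕ → ℝ) (hp : Function.Injective p)
    (hacc : ∀ C : ℝ, 0 < C → {n : ℕ | |p n| ≤ C}.Finite)
    (r : ℕ → ℕ) (hrpos : ∀ n, 0 < r n) (c : ℕ → ℕ → ℂ)
    (hsum : ∀ ε : ℝ, 0 < ε → Summable (fun n : ℕ =>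
      ∑ k ∈ Finset.Icc 1 (r n), ‖c n k‖ * ε ^ (-(k : ℤ))))
    (P : ℂ → ℂ)
    (hP : ∀ s : ℂ, P s = ∑' n : ℕ, ∑ k ∈ Finset.Icc 1 (r n),
      c n k * (s - Complex.I * p n) ^ (-(k : ℤ)))
    (f : ℝ → ℂ)
    (hf : ∀ t : ℝ, f t = ∑' n : ℕ, Complex.exp (Complex.I * p n * t) *
      ∑ k ∈ Finset.Icc 1 (r n),
        c n k * (t : ℂ) ^ (k - 1) / (Nat.factorial (k - 1))) :
    (∀ s : ℂ, 0 < s.re →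
      MeasureTheory.IntegrableOn (fun t : ℝ => Complex.exp (-s * t) * f t) (Set.Ioi 0) ∧
      (∫ t in Set.Ioi (0:ℝ), Complex.exp (-s * t) * f t) = P s) ∧
    (∀ s : ℂ, s.re < 0 →
      MeasureTheory.IntegrableOn (fun t : ℝ => Complex.exp (-s * t) * f t) (Set.Iio 0) ∧
      -(∫ t in Set.Iio (0:ℝ), Complex.exp (-s * t) * f t) = P s) :=
  statement6_general p r c hsum P hP f hf
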